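/- Let p be a probability mass function on a finite set C × F with |C| ≥ 2, f ∈ F, ĉ the unique maximizer of c ↦ p(c, f), and let ε_glob = δ/(1+δ) with δ = p(ĉ, f) − max_{c ≠ ĉ} p(c, f) > 0. Then for every q in the ε-contamination M_{p,ε} with ε < ε_glob, and for every c ≠ ĉ, we have q(c, f) < q(ĉ, f). -/

import Mathlib

/-!
Contaminating `p` with weight `ε` moves each value `q x` into the interval
`[(1 - ε) p x, (1 - ε) p x + ε]`. So `q (c, f) ≤ (1 - ε) M + ε`, where `M` is the largest competing
value, while `q (c₀, f) ≥ (1 - ε) (M + δ)`; and `ε < δ / (1 + δ)` says exactly `ε < (1 - ε) δ`.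
-/

/-- A probability mass function on a finite set: nonnegative and sums to one. -/
def IsPMF {X : Type*} [Fintype X] (p : X → ℝ) : Prop :=
  (∀ x, 0 ≤ p x) ∧ ∑ x, p x = 1

/-- The ε-contamination of a mass function `p`. -/
def contam {X : Type*} [Fintype X] (p : X → ℝ) (ε : ℝ) : Set (X → ℝ) :=
  {q | ∃ p' : X → ℝ, IsPMF p' ∧ q = fun x => (1 - ε) * p x + ε * p' x}

theorem IsPMF.le_one {X : Type*} [Fintype X] {p : X → ℝ} (hp : IsPMF p) (x : X) : p x ≤ 1 :=
  hp.2 ▸ Finset.single_le_sum (fun y _ => hp.1 y) (Finset.mem_univ x)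

theorem contam_apply_lt_of_lt {X : Type*} [Fintype X] {p q : X → ℝ} {ε : ℝ} (hq : q ∈ contam p ε)
    (hε : 0 ≤ ε) {x y : X} (hxy : (1 - ε) * p x + ε < (1 - ε) * p y) : q x < q y := by
  obtain ⟨p', hp', rfl⟩ := hq
  have hx : ε * p' x ≤ ε := mul_le_of_le_one_right hε (hp'.le_one x)
  have hy : 0 ≤ ε * p' y := mul_nonneg hε (hp'.1 y)
  dsimp only
  linarith

theorem lt_div_one_add_iff {ε δ : ℝ} (hδ : 0 < 1 + δ) : ε < δ / (1 + δ) ↔ ε < (1 - ε) * δ := by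
  rw [lt_div_iff₀ hδ]
  constructor <;> intro h <;> linarith

theorem le_sSup_setOf_ne {ι : Type*} [Finite ι] (g : ι → ℝ) {i₀ i : ι} (hi : i ≠ i₀) :
    g i ≤ sSup {y : ℝ | ∃ j, j ≠ i₀ ∧ y = g j} :=
  le_csSup ((Set.finite_range g).subset (by rintro _ ⟨j, -, rfl⟩; exact ⟨j, rfl⟩)).bddAbove
    ⟨i, hi, rfl⟩

theorem stmt17_general {C F : Type*} [Fintype C] [Fintype F]
    (p : C × F → ℝ) (f : F) (c₀ : C) :
    let δ : ℝ := p (c₀, f) - sSup {y : ℝ | ∃ c : C, c ≠ c₀ ∧ y = p (c, f)}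
    0 < δ →
      ∀ ε : ℝ, 0 ≤ ε → ε < δ / (1 + δ) →
        ∀ q ∈ contam p ε, ∀ c : C, c ≠ c₀ → q (c, f) < q (c₀, f) := by
  intro δ hδ ε hε hεδ q hq c hc
  rw [lt_div_one_add_iff (by linarith)] at hεδ
  have hε1 : 0 < 1 - ε := pos_of_mul_pos_left (hε.trans_lt hεδ) hδ.le
  have hpc := le_sSup_setOf_ne (fun c => p (c, f)) hc
  refine contam_apply_lt_of_lt hq hε ?_
  calc (1 - ε) * p (c, f) + ε
      ≤ (1 - ε) * (p (c₀, f) - δ) + ε := by gcongr; rwa [sub_sub_cancel]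
    _ < (1 - ε) * p (c₀, f) := by linarith

theorem stmt17 {C F : Type*} [Fintype C] [Fintype F] (hC : 2 ≤ Fintype.card C)
    (p : C × F → ℝ) (hp : IsPMF p) (f : F) (c₀ : C)
    (hmax : ∀ c : C, c ≠ c₀ → p (c, f) < p (c₀, f)) :
    let δ : ℝ := p (c₀, f) - sSup {y : ℝ | ∃ c : C, c ≠ c₀ ∧ y = p (c, f)}
    0 < δ →
      ∀ ε : ℝ, 0 ≤ ε → ε < δ / (1 + δ) →
        ∀ q ∈ contam p ε, ∀ c : C, c ≠ c₀ → q (c, f) < q (c₀, f) :=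
  stmt17_general p f c₀
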